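/- Let G be a finite group and let P and Q be positions (finite subsets of G) with ⌈P⌉ = ⌈Q⌉ and |P| ≡ |Q| (mod 2). Then nim(P) = nim(Q). -/

import Mathlib

/-- The minimum excludant of a set of natural numbers. -/
noncomputable def mex (S : Set ℕ) : ℕ := sInf {n : ℕ | n ∉ S}

open Classical in
/-- The nim-value of a position in the achievement game GEN(G): a position `P`
is terminal when it generates `G` (so its nim-value is `mex ∅ = 0`); otherwise
its options are the sets `insert g P` for `g ∉ P`. -/
noncomputable def gameNim {G : Type*} [Group G] [Fintype G] (P : Finset G) : ℕ :=
  if Subgroup.closure (P : Set G) = ⊤ then 0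
  else mex {n : ℕ | ∃ g : {g : G // g ∉ P}, gameNim (insert g.1 P) = n}
termination_by Pᶜ.card
decreasing_by
  exact Finset.card_lt_card (by
    constructor
    · intro x hx
      simp only [Finset.mem_compl, Finset.mem_insert] at hx ⊢
      exact fun h => hx (Or.inr h)
    · intro hsub
      have h1 : g.1 ∈ Pᶜ := Finset.mem_compl.mpr g.2
      have h2 : g.1 ∈ (insert g.1 P)ᶜ := hsub h1
      simp at h2)


/-- ⌈P⌉: the intersection of all maximal subgroups of `G` containing `P`
(equal to `G`, i.e. `⊤`, if no maximal subgroup contains `P`). -/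
def ceilSet {G : Type*} [Group G] (P : Set G) : Subgroup G :=
  sInf {M : Subgroup G | IsCoatom M ∧ P ⊆ (M : Set G)}

/-!
Write `T = ⌈P⌉ = ⌈Q⌉`. As `⌈·⌉` is a closure operator whose value `G` detects the terminal
positions, the ceiling and parity of an option `P ∪ {g}` depend only on those of `P` and on
whether `g ∈ T`. By induction, neither `P` nor `Q` has an option with the nim-value of the other,
which forces equal mex values: an option `P ∪ {g}` has an equivalent option `Q ∪ {g'}` of `Q`,
unless `g ∈ T` and `Q = T` already; then `P ∪ {g} ⊊ Q` by parity, and `P ∪ {g}` has an option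
`P ∪ {g, c}` equivalent to `Q`.
-/

section Ceil

variable {G : Type*} [Group G]

theorem subset_ceilSet (P : Set G) : P ⊆ ceilSet P :=
  fun _ hx => Subgroup.mem_sInf.2 fun _ hM => hM.2 hx

theorem ceilSet_le_of_subset {P R : Set G} (h : R ⊆ ceilSet P) : ceilSet R ≤ ceilSet P :=
  le_sInf fun _ hM => sInf_le ⟨hM.1, h.trans (SetLike.coe_subset_coe.2 (sInf_le hM))⟩

theorem ceilSet_mono {P R : Set G} (h : P ⊆ R) : ceilSet P ≤ ceilSet R :=
  ceilSet_le_of_subset (h.trans (subset_ceilSet R))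

theorem ceilSet_insert_of_mem {P : Set G} {g : G} (hg : g ∈ ceilSet P) :
    ceilSet (insert g P) = ceilSet P :=
  le_antisymm (ceilSet_le_of_subset (Set.insert_subset hg (subset_ceilSet P)))
    (ceilSet_mono (Set.subset_insert g P))

theorem ceilSet_insert_congr {P Q : Set G} (h : ceilSet P = ceilSet Q) (g : G) :
    ceilSet (insert g P) = ceilSet (insert g Q) := by
  have key : ∀ {P Q : Set G}, ceilSet P = ceilSet Q →
      ceilSet (insert g P) ≤ ceilSet (insert g Q) := fun {P Q} h =>
    ceilSet_le_of_subset <| Set.insert_subset (subset_ceilSet _ (Set.mem_insert g Q)) <|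
      (subset_ceilSet P).trans <| h ▸ ceilSet_mono (Set.subset_insert g Q)
  exact le_antisymm (key h) (key h.symm)

theorem ceilSet_eq_top_iff [Finite G] (P : Set G) :
    ceilSet P = ⊤ ↔ Subgroup.closure P = ⊤ := by
  refine ⟨fun h => ?_, fun h => sInf_eq_top.2 fun M hM => ?_⟩
  · by_contra hne
    obtain ⟨M, hM, hle⟩ := (eq_top_or_exists_le_coatom (Subgroup.closure P)).resolve_left hne
    exact hM.1 (top_le_iff.1 (h ▸ sInf_le ⟨hM, Subgroup.subset_closure.trans hle⟩))
  · exact absurd (top_le_iff.1 (h ▸ (Subgroup.closure_le M).2 hM.2)) hM.1.1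

theorem closure_ne_top_of_ceilSet_ne_top [Finite G] {P : Set G} (h : ceilSet P ≠ ⊤) :
    Subgroup.closure P ≠ ⊤ :=
  mt (ceilSet_eq_top_iff P).2 h

def SameCeilAndParity (P Q : Finset G) : Prop :=
  ceilSet (P : Set G) = ceilSet (Q : Set G) ∧ P.card % 2 = Q.card % 2

namespace SameCeilAndParity

variable {P Q : Finset G}

theorem symm (h : SameCeilAndParity P Q) : SameCeilAndParity Q P :=
  ⟨h.1.symm, h.2.symm⟩

variable [DecidableEq G] {g b : G}

theorem congr_insert (h : SameCeilAndParity P Q) (hgP : g ∉ P) (hgQ : g ∉ Q) :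
    SameCeilAndParity (insert g P) (insert g Q) := by
  obtain ⟨hceil, hpar⟩ := h
  refine ⟨?_, ?_⟩
  · rw [Finset.coe_insert, Finset.coe_insert, ceilSet_insert_congr hceil]
  · rw [Finset.card_insert_of_notMem hgP, Finset.card_insert_of_notMem hgQ]
    omega

theorem insert_of_mem_ceilSet (h : SameCeilAndParity P Q) (hg : g ∈ ceilSet (P : Set G))
    (hgP : g ∉ P) (hb : b ∈ ceilSet (Q : Set G)) (hbQ : b ∉ Q) :
    SameCeilAndParity (insert g P) (insert b Q) := by
  obtain ⟨hceil, hpar⟩ := h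
  refine ⟨?_, ?_⟩
  · rw [Finset.coe_insert, Finset.coe_insert, ceilSet_insert_of_mem hg, ceilSet_insert_of_mem hb,
      hceil]
  · rw [Finset.card_insert_of_notMem hgP, Finset.card_insert_of_notMem hbQ]
    omega

theorem insert_insert_left (h : SameCeilAndParity P Q) {c : G} (hg : g ∈ ceilSet (P : Set G))
    (hgP : g ∉ P) (hc : c ∈ ceilSet (P : Set G)) (hcP : c ∉ insert g P) :
    SameCeilAndParity (insert c (insert g P)) Q := by
  obtain ⟨hceil, hpar⟩ := h
  refine ⟨?_, ?_⟩
  · rw [Finset.coe_insert, Finset.coe_insert,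
      ceilSet_insert_of_mem (ceilSet_mono (Set.subset_insert g _) hc), ceilSet_insert_of_mem hg,
      hceil]
  · rw [Finset.card_insert_of_notMem hcP, Finset.card_insert_of_notMem hgP]
    omega

end SameCeilAndParity

end Ceil

theorem card_compl_insert_add_one {α : Type*} [Fintype α] [DecidableEq α] {s : Finset α}
    {a : α} (ha : a ∉ s) : (insert a s)ᶜ.card + 1 = sᶜ.card := by
  rw [Finset.compl_insert, Finset.card_erase_add_one (Finset.mem_compl.2 ha)]

theorem mex_notMem {S : Set ℕ} (hS : S.Finite) : mex S ∉ S :=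
  Nat.sInf_mem hS.infinite_compl.nonempty

section Game

open Classical

variable {G : Type*} [Group G] [Fintype G]

theorem gameNim_of_closure_eq_top {P : Finset G} (h : Subgroup.closure (P : Set G) = ⊤) :
    gameNim P = 0 := by
  rw [gameNim, if_pos h]

theorem gameNim_of_closure_ne_top {P : Finset G} (h : Subgroup.closure (P : Set G) ≠ ⊤) :
    gameNim P = mex {n : ℕ | ∃ g : {g : G // g ∉ P}, gameNim (insert g.1 P) = n} := by
  rw [gameNim, if_neg h]

theorem gameNim_insert_ne_self {P : Finset G} (hP : Subgroup.closure (P : Set G) ≠ ⊤) {g : G}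
    (hg : g ∉ P) : gameNim (insert g P) ≠ gameNim P := by
  intro h
  rw [gameNim_of_closure_ne_top hP] at h
  exact mex_notMem (Set.finite_range fun g : {g : G // g ∉ P} => gameNim (insert g.1 P))
    ⟨⟨g, hg⟩, h⟩

theorem gameNim_le_of_forall_insert_ne {P : Finset G} (hP : Subgroup.closure (P : Set G) ≠ ⊤)
    {n : ℕ} (h : ∀ g ∉ P, gameNim (insert g P) ≠ n) : gameNim P ≤ n := by
  rw [gameNim_of_closure_ne_top hP]
  refine Nat.sInf_le ?_
  rintro ⟨g, hg⟩
  exact h g.1 g.2 hg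

theorem SameCeilAndParity.gameNim_insert_ne {P Q : Finset G} (hPQ : SameCeilAndParity P Q)
    (IH : ∀ P' Q' : Finset G, P'ᶜ.card + Q'ᶜ.card < Pᶜ.card + Qᶜ.card →
      SameCeilAndParity P' Q' → gameNim P' = gameNim Q')
    (hT : ceilSet (P : Set G) ≠ ⊤) {g : G} (hg : g ∉ P) :
    gameNim (insert g P) ≠ gameNim Q := by
  have hQ : Subgroup.closure (Q : Set G) ≠ ⊤ := closure_ne_top_of_ceilSet_ne_top (hPQ.1 ▸ hT)
  have hQT : (Q : Set G) ⊆ ceilSet (P : Set G) := hPQ.1 ▸ subset_ceilSet _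
  have hgP := card_compl_insert_add_one hg
  by_cases hgT : g ∈ ceilSet (P : Set G)
  · by_cases hQ_proper : ∃ b ∈ ceilSet (Q : Set G), b ∉ Q
    · obtain ⟨b, hbT, hbQ⟩ := hQ_proper
      have hbQ' := card_compl_insert_add_one hbQ
      rw [IH _ _ (by omega) (hPQ.insert_of_mem_ceilSet hgT hg hbT hbQ)]
      exact gameNim_insert_ne_self hQ hbQ
    · push Not at hQ_proper
      have hsub : insert g P ⊆ Q := fun x hx =>
        hQ_proper x (hPQ.1 ▸ Set.insert_subset hgT (subset_ceilSet _) (by simpa using hx))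
      have hne : insert g P ≠ Q := by
        rintro rfl
        have hpar := hPQ.2
        rw [Finset.card_insert_of_notMem hg] at hpar
        omega
      obtain ⟨c, hcQ, hc⟩ := Finset.exists_of_ssubset (hsub.ssubset_of_ne hne)
      have hcP' := card_compl_insert_add_one hc
      have hPg : Subgroup.closure ((insert g P : Finset G) : Set G) ≠ ⊤ :=
        closure_ne_top_of_ceilSet_ne_top (by rwa [Finset.coe_insert, ceilSet_insert_of_mem hgT])
      rw [← IH _ _ (by omega) (hPQ.insert_insert_left hgT hg (hQT hcQ) hc)]
      exact (gameNim_insert_ne_self hPg hc).symm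
  · have hgQ : g ∉ Q := fun h => hgT (hQT h)
    have hgQ' := card_compl_insert_add_one hgQ
    rw [IH _ _ (by omega) (hPQ.congr_insert hg hgQ)]
    exact gameNim_insert_ne_self hQ hgQ

end Game

/-- Structure equivalent positions of the same parity have equal nim-values. -/
theorem nim_eq_of_structure_equiv {G : Type*} [Group G] [Fintype G]
    (P Q : Finset G) (hceil : ceilSet (P : Set G) = ceilSet (Q : Set G))
    (hpty : P.card % 2 = Q.card % 2) :
    gameNim P = gameNim Q := by
  classical
  suffices h : ∀ n (P Q : Finset G), Pᶜ.card + Qᶜ.card = n → SameCeilAndParity P Q →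
      gameNim P = gameNim Q from h _ P Q rfl ⟨hceil, hpty⟩
  intro n
  induction n using Nat.strong_induction_on with
  | _ n IH =>
  rintro P Q rfl hPQ
  by_cases hT : ceilSet (P : Set G) = ⊤
  · rw [gameNim_of_closure_eq_top ((ceilSet_eq_top_iff _).1 hT),
      gameNim_of_closure_eq_top ((ceilSet_eq_top_iff _).1 (hPQ.1 ▸ hT))]
  exact le_antisymm
    (gameNim_le_of_forall_insert_ne (closure_ne_top_of_ceilSet_ne_top hT) fun g hg =>
      hPQ.gameNim_insert_ne (fun P' Q' hlt => IH _ hlt P' Q' rfl) hT hg)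
    (gameNim_le_of_forall_insert_ne (closure_ne_top_of_ceilSet_ne_top (hPQ.1 ▸ hT)) fun g hg =>
      hPQ.symm.gameNim_insert_ne (fun P' Q' hlt => IH _ (by omega) P' Q' rfl) (hPQ.1 ▸ hT) hg)
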